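/- For n ≥ 1 and w ∈ 𝔥, one has f_n(w) = (-1)^{n+1} φ( yⁿz ⊛̃ φ(w) ), where z = x+y. -/

import Mathlib

open scoped BigOperators

abbrev Ltr := Fin 2

/-- `𝔥 = ℚ⟨x,y⟩`, realized as the monoid algebra of the free monoid on two letters. -/
abbrev H := MonoidAlgebra ℚ (FreeMonoid Ltr)

/-- The word `u₁⋯u_m` as an element of `𝔥`. -/
noncomputable def wrd (l : List Ltr) : H := MonoidAlgebra.of ℚ (FreeMonoid Ltr) (FreeMonoid.ofList l)

/-- The generator `x`. -/
noncomputable def Xh : H := wrd [0]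
/-- The generator `y`. -/
noncomputable def Yh : H := wrd [1]

/-- `e₀ = x`, `e₁ = -y`. -/
noncomputable def eH (a : Ltr) : H := if a = 0 then Xh else -Yh

/-- The product `e_{a₁}⋯e_{a_m} ∈ 𝔥` for an `e`-word. -/
noncomputable def ew (l : List Ltr) : H := ((-1 : ℚ) ^ (l.count 1)) • wrd l

/-- The symmetric harmonic product on basis `e`-words:
`e_a ⊛̃ e_{b₁}⋯e_{bₙ} = e_{b₁}⋯e_{bₙ} ⊛̃ e_a = e_{ab₁}⋯e_{abₙ}` and
`e_a w₁ ⊛̃ e_b w₂ = e_{ab}(w₁ ⊛̃ e_b w₂) + e_{ab}(e_a w₁ ⊛̃ w₂) - e_{ab}e₀(w₁ ⊛̃ w₂)`. -/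
noncomputable def mstE : List Ltr → List Ltr → H
  | [a], b :: bs => ew ((b :: bs).map (fun c => a * c))
  | a :: a' :: as, [b] => ew ((a :: a' :: as).map (fun c => c * b))
  | a :: a' :: as, b :: b' :: bs =>
      eH (a * b) * mstE (a' :: as) (b :: b' :: bs)
      + eH (a * b) * mstE (a :: a' :: as) (b' :: bs)
      - eH (a * b) * Xh * mstE (a' :: as) (b' :: bs)
  | _, _ => 0
termination_by l₁ l₂ => l₁.length + l₂.length

/-- The symmetric harmonic product `⊛̃ : 𝔥' ⊗ 𝔥' → 𝔥'`, extended bilinearly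
(using that the word `u₁⋯u_m` equals `(-1)^{#{i : uᵢ = y}} e_{u₁}⋯e_{u_m}`). -/
noncomputable def mst (f g : H) : H :=
  f.coeff.sum fun u cu => g.coeff.sum fun v cv =>
    (cu * cv * (-1 : ℚ) ^ ((FreeMonoid.toList u).count 1)
      * (-1 : ℚ) ^ ((FreeMonoid.toList v).count 1)) •
      mstE (FreeMonoid.toList u) (FreeMonoid.toList v)

/-- `dn n w = yⁿ ⋄ w` where `⋄` is the bilinear map with `1⋄w = w⋄1 = w`,
`yw₁ ⋄ yw₂ = y(yw₁ ⋄ w₂) - y(w₁ ⋄ xw₂)` and `yw₁ ⋄ xw₂ = x(yw₁ ⋄ w₂) + y(w₁ ⋄ xw₂)`. -/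
noncomputable def dn : ℕ → List Ltr → H
  | 0, u => wrd u
  | n + 1, [] => wrd (List.replicate (n + 1) 1)
  | n + 1, a :: u =>
      if a = 0 then Xh * dn (n + 1) u + Yh * dn n (a :: u)
      else Yh * dn (n + 1) u - Yh * dn n ((0 : Ltr) :: u)
termination_by n u => (n, u.length)

/-- `dia n f = yⁿ ⋄ f`, extended linearly. -/
noncomputable def dia (n : ℕ) (f : H) : H := f.coeff.sum fun u c => c • dn n u.toList

/-- `f_n : 𝔥 → 𝔥` for `n ∈ ℤ`: `f_n = 0` for `n < 0`, `f₀ = id`, and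
`f_n(w) = yⁿ ⋄ w - (y^{n-1} ⋄ w)y` for `n ≥ 1`. -/
noncomputable def fZ (n : ℤ) (f : H) : H :=
  if n < 0 then 0 else if n = 0 then f else dia n.toNat f - dia (n.toNat - 1) f * Yh

/-- The automorphism `φ` with `φ(x) = z = x+y`, `φ(y) = -y`. -/
noncomputable def phiH : H →ₐ[ℚ] H :=
  MonoidAlgebra.lift ℚ H (FreeMonoid Ltr)
    (FreeMonoid.lift fun a => if a = 0 then Xh + Yh else -Yh)

/-!
Conjugation by the involution `φ` (which exchanges `x` and `z` and negates `y`) turns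
`w ↦ yⁿ ⋄ w` into an operator `Gₙ` with `Gₙ(xw) = x Gₙ(w)`, `G_{n+1}(yw) = y G_{n+1}(w) - y Gₙ(zw)`,
`G₀ = id` and `Gₙ(1) = (-y)ⁿ`. Hence `T_m = φ ∘ f_{m+1} ∘ φ = G_{m+1} + G_m(·) y` satisfies
`T_m(1) = 0`, `T_m(xw) = x T_m(w)`, `T_{m+1}(yw) = y T_{m+1}(w) - y T_m(zw)` and
`T_0(yw) = y T_0(w) - yzw`, a recursion on the first letter of `w` which determines `T`.
Written in the basis of words, the recursion of `⊛̃` shows that `(-1)^m (y^{m+1}z ⊛̃ ·)` obeys the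
same recursion; in the boundary cases the contributions of the two words `y^{m+1}x` and `y^{m+2}`
of `y^{m+1}z` cancel.
-/

lemma wrd_nil : wrd [] = 1 := rfl

lemma wrd_append (l l' : List Ltr) : wrd (l ++ l') = wrd l * wrd l' := by
  simp only [wrd, ← map_mul]
  rfl

lemma wrd_cons (a : Ltr) (l : List Ltr) : wrd (a :: l) = wrd [a] * wrd l :=
  wrd_append [a] l

lemma wrd_zero_cons (l : List Ltr) : wrd (0 :: l) = Xh * wrd l := wrd_cons 0 l

lemma wrd_one_cons (l : List Ltr) : wrd (1 :: l) = Yh * wrd l := wrd_cons 1 l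

lemma wrd_replicate_zero (n : ℕ) : wrd (List.replicate n 0) = Xh ^ n := by
  induction n with
  | zero => rfl
  | succ n ih => rw [List.replicate_succ, wrd_zero_cons, ih, pow_succ']

lemma wrd_replicate_one (n : ℕ) : wrd (List.replicate n 1) = Yh ^ n := by
  induction n with
  | zero => rfl
  | succ n ih => rw [List.replicate_succ, wrd_one_cons, ih, pow_succ']

lemma linearMap_ext_wrd {T S : H →ₗ[ℚ] H} (h : ∀ l, T (wrd l) = S (wrd l)) : T = S :=
  MonoidAlgebra.lhom_ext' fun u => LinearMap.ext_ring (h u.toList)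

lemma phiH_X : phiH Xh = Xh + Yh := by
  simp [phiH, Xh, wrd]

lemma phiH_Y : phiH Yh = -Yh := by
  simp [phiH, Yh, wrd]

lemma phiH_Z : phiH (Xh + Yh) = Xh := by
  rw [map_add, phiH_X, phiH_Y, add_neg_cancel_right]

lemma phiH_phiH (f : H) : phiH (phiH f) = f := by
  suffices phiH.toLinearMap ∘ₗ phiH.toLinearMap = LinearMap.id from congr($this f)
  refine linearMap_ext_wrd fun l => ?_
  induction l with
  | nil => simp [wrd_nil]
  | cons a l ih =>
    simp only [LinearMap.comp_apply, AlgHom.toLinearMap_apply, LinearMap.id_apply] at ih ⊢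
    rw [wrd_cons, map_mul, map_mul, ih]
    fin_cases a
    · change phiH (phiH Xh) * wrd l = Xh * wrd l
      rw [phiH_X, phiH_Z]
    · change phiH (phiH Yh) * wrd l = Yh * wrd l
      rw [phiH_Y, map_neg, phiH_Y, neg_neg]

lemma dn_zero (u : List Ltr) : dn 0 u = wrd u := by rw [dn]

lemma dn_nil (n : ℕ) : dn n [] = Yh ^ n := by
  cases n with
  | zero => rw [dn]; rfl
  | succ n => rw [dn, wrd_replicate_one]

lemma dn_succ_zero_cons (n : ℕ) (u : List Ltr) :
    dn (n + 1) (0 :: u) = Xh * dn (n + 1) u + Yh * dn n (0 :: u) := by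
  rw [dn]; simp

lemma dn_succ_one_cons (n : ℕ) (u : List Ltr) :
    dn (n + 1) (1 :: u) = Yh * dn (n + 1) u - Yh * dn n (0 :: u) := by
  rw [dn]; simp

noncomputable def diaL (n : ℕ) : H →ₗ[ℚ] H :=
  Finsupp.linearCombination ℚ (fun u : FreeMonoid Ltr => dn n u.toList) ∘ₗ
    (MonoidAlgebra.coeffLinearEquiv ℚ).toLinearMap

lemma diaL_apply (n : ℕ) (f : H) : diaL n f = dia n f :=
  Finsupp.linearCombination_apply ℚ f.coeff

lemma diaL_wrd (n : ℕ) (l : List Ltr) : diaL n (wrd l) = dn n l := by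
  simp [diaL, wrd]

lemma diaL_zero_apply (f : H) : diaL 0 f = f := by
  suffices diaL 0 = LinearMap.id from congr($this f)
  exact linearMap_ext_wrd fun l => by rw [diaL_wrd, dn_zero, LinearMap.id_apply]

lemma diaL_one (n : ℕ) : diaL n 1 = Yh ^ n := by
  rw [← wrd_nil, diaL_wrd, dn_nil]

lemma diaL_succ_X_mul (n : ℕ) (f : H) :
    diaL (n + 1) (Xh * f) = Xh * diaL (n + 1) f + Yh * diaL n (Xh * f) := by
  suffices diaL (n + 1) ∘ₗ LinearMap.mulLeft ℚ Xh =
      LinearMap.mulLeft ℚ Xh ∘ₗ diaL (n + 1) +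
        LinearMap.mulLeft ℚ Yh ∘ₗ diaL n ∘ₗ LinearMap.mulLeft ℚ Xh from congr($this f)
  refine linearMap_ext_wrd fun l => ?_
  simp [← wrd_zero_cons, diaL_wrd, dn_succ_zero_cons]

lemma diaL_succ_Y_mul (n : ℕ) (f : H) :
    diaL (n + 1) (Yh * f) = Yh * diaL (n + 1) f - Yh * diaL n (Xh * f) := by
  suffices diaL (n + 1) ∘ₗ LinearMap.mulLeft ℚ Yh =
      LinearMap.mulLeft ℚ Yh ∘ₗ diaL (n + 1) -
        LinearMap.mulLeft ℚ Yh ∘ₗ diaL n ∘ₗ LinearMap.mulLeft ℚ Xh from congr($this f)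
  refine linearMap_ext_wrd fun l => ?_
  simp [← wrd_zero_cons, ← wrd_one_cons, diaL_wrd, dn_succ_one_cons]

lemma diaL_Z_mul (n : ℕ) (f : H) : diaL n ((Xh + Yh) * f) = (Xh + Yh) * diaL n f := by
  cases n with
  | zero => rw [diaL_zero_apply, diaL_zero_apply]
  | succ n =>
    rw [add_mul, map_add, diaL_succ_X_mul, diaL_succ_Y_mul, add_mul]
    abel

noncomputable def conjDia (n : ℕ) : H →ₗ[ℚ] H :=
  phiH.toLinearMap ∘ₗ diaL n ∘ₗ phiH.toLinearMap

lemma conjDia_apply (n : ℕ) (f : H) : conjDia n f = phiH (diaL n (phiH f)) := rfl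

lemma conjDia_zero_apply (f : H) : conjDia 0 f = f := by
  rw [conjDia_apply, diaL_zero_apply, phiH_phiH]

lemma conjDia_one (n : ℕ) : conjDia n 1 = (-Yh) ^ n := by
  rw [conjDia_apply, map_one, diaL_one, map_pow, phiH_Y]

lemma conjDia_X_mul (n : ℕ) (f : H) : conjDia n (Xh * f) = Xh * conjDia n f := by
  rw [conjDia_apply, map_mul, phiH_X, diaL_Z_mul, map_mul, phiH_Z, conjDia_apply]

lemma conjDia_succ_Y_mul (n : ℕ) (f : H) :
    conjDia (n + 1) (Yh * f) = Yh * conjDia (n + 1) f - Yh * conjDia n ((Xh + Yh) * f) := by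
  have hX : Xh * phiH f = phiH ((Xh + Yh) * f) := by rw [map_mul, phiH_Z]
  rw [conjDia_apply, map_mul, phiH_Y, neg_mul, map_neg, diaL_succ_Y_mul, hX]
  simp only [map_neg, map_sub, map_mul, phiH_Y, conjDia_apply]
  noncomm_ring

noncomputable def conjF (m : ℕ) : H →ₗ[ℚ] H :=
  conjDia (m + 1) + LinearMap.mulRight ℚ Yh ∘ₗ conjDia m

lemma conjF_apply (m : ℕ) (f : H) : conjF m f = conjDia (m + 1) f + conjDia m f * Yh := rfl

lemma fZ_succ_eq (m : ℕ) (w : H) : fZ ((m + 1 : ℕ) : ℤ) w = phiH (conjF m (phiH w)) := by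
  have hfZ : fZ ((m + 1 : ℕ) : ℤ) w = dia (m + 1) w - dia m w * Yh := by
    rw [fZ, if_neg (by omega), if_neg (by omega)]
    rfl
  rw [hfZ, conjF_apply, conjDia_apply, conjDia_apply, map_add, map_mul, phiH_phiH, phiH_phiH,
    phiH_phiH, phiH_Y, diaL_apply, diaL_apply, mul_neg, sub_eq_add_neg]

structure IsFRecursive (A : ℕ → H →ₗ[ℚ] H) : Prop where
  map_one : ∀ m, A m 1 = 0
  map_X_mul : ∀ m l, A m (Xh * wrd l) = Xh * A m (wrd l)
  map_Y_mul_succ : ∀ m l,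
    A (m + 1) (Yh * wrd l) = Yh * A (m + 1) (wrd l) - Yh * A m ((Xh + Yh) * wrd l)
  map_Y_mul_zero : ∀ l, A 0 (Yh * wrd l) = Yh * A 0 (wrd l) - Yh * ((Xh + Yh) * wrd l)

theorem IsFRecursive.unique {A B : ℕ → H →ₗ[ℚ] H} (hA : IsFRecursive A)
    (hB : IsFRecursive B) : A = B := by
  suffices h : ∀ l m, A m (wrd l) = B m (wrd l) from
    funext fun m => linearMap_ext_wrd fun l => h l m
  intro l
  induction l with
  | nil => intro m; rw [wrd_nil, hA.map_one, hB.map_one]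
  | cons a l ih =>
    intro m
    fin_cases a
    · change A m (wrd (0 :: l)) = B m (wrd (0 :: l))
      rw [wrd_zero_cons, hA.map_X_mul, hB.map_X_mul, ih]
    · change A m (wrd (1 :: l)) = B m (wrd (1 :: l))
      rw [wrd_one_cons]
      induction m with
      | zero => rw [hA.map_Y_mul_zero, hB.map_Y_mul_zero, ih]
      | succ m ihm =>
        rw [hA.map_Y_mul_succ, hB.map_Y_mul_succ, add_mul, map_add, map_add, hA.map_X_mul,
          hB.map_X_mul, ih, ih, ihm]

theorem conjF_isFRecursive : IsFRecursive conjF where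
  map_one m := by
    rw [conjF_apply, conjDia_one, conjDia_one, pow_succ, ← mul_add, neg_add_cancel, mul_zero]
  map_X_mul m l := by
    rw [conjF_apply, conjF_apply, conjDia_X_mul, conjDia_X_mul, mul_add, mul_assoc]
  map_Y_mul_succ m l := by
    simp only [conjF_apply, conjDia_succ_Y_mul]
    noncomm_ring
  map_Y_mul_zero l := by
    simp only [conjF_apply, conjDia_succ_Y_mul, conjDia_zero_apply]
    noncomm_ring

lemma mstE_nil_right (l : List Ltr) : mstE l [] = 0 := by
  rcases l with _ | ⟨a, _ | ⟨a', as⟩⟩ <;> simp [mstE]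

lemma mstE_singleton_left (a b : Ltr) (bs : List Ltr) :
    mstE [a] (b :: bs) = ew ((b :: bs).map (a * ·)) := by
  rw [mstE]

lemma mstE_singleton_right {l : List Ltr} (hl : l ≠ []) (b : Ltr) :
    mstE l [b] = ew (l.map (· * b)) := by
  rcases l with _ | ⟨a, _ | ⟨a', as⟩⟩
  · exact absurd rfl hl
  · simp [mstE, mul_comm]
  · rw [mstE]

lemma mstE_cons_cons (a a' b b' : Ltr) (as bs : List Ltr) :
    mstE (a :: a' :: as) (b :: b' :: bs)
      = eH (a * b) * mstE (a' :: as) (b :: b' :: bs)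
      + eH (a * b) * mstE (a :: a' :: as) (b' :: bs)
      - eH (a * b) * Xh * mstE (a' :: as) (b' :: bs) := by
  rw [mstE]

lemma ew_zero_cons (l : List Ltr) : ew (0 :: l) = Xh * ew l := by
  simp [ew, wrd_zero_cons]

lemma ew_replicate_zero (n : ℕ) : ew (List.replicate n 0) = Xh ^ n := by
  simp [ew, wrd_replicate_zero, List.count_replicate]

lemma mstE_zero_cons_right (l : List Ltr) {l' : List Ltr} (hl' : l' ≠ []) :
    mstE l (0 :: l') = Xh * mstE l l' := by
  obtain ⟨c, cs, rfl⟩ := List.exists_cons_of_ne_nil hl'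
  induction l with
  | nil => simp [mstE]
  | cons a t ih =>
    rcases t with _ | ⟨a', as⟩
    · rw [mstE_singleton_left, mstE_singleton_left, List.map_cons, mul_zero, ew_zero_cons]
    · rw [mstE_cons_cons, ih, mul_zero, eH, if_pos rfl]
      noncomm_ring

lemma mst_wrd_wrd (l₁ l₂ : List Ltr) :
    mst (wrd l₁) (wrd l₂)
      = ((-1 : ℚ) ^ (l₁.count 1) * (-1 : ℚ) ^ (l₂.count 1)) • mstE l₁ l₂ := by
  simp [mst, wrd]

lemma mst_add_left (f₁ f₂ g : H) : mst (f₁ + f₂) g = mst f₁ g + mst f₂ g := by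
  rw [mst, mst, mst]
  apply Finsupp.sum_add_index'
  · intro u; simp
  · intro u c₁ c₂
    rw [← Finsupp.sum_add]
    refine Finsupp.sum_congr fun v _ => ?_
    rw [← add_smul]
    ring_nf

noncomputable def mstR (f : H) : H →ₗ[ℚ] H :=
  f.coeff.sum fun u cu =>
    Finsupp.linearCombination ℚ (fun v : FreeMonoid Ltr =>
      (cu * (-1 : ℚ) ^ (u.toList.count 1) * (-1 : ℚ) ^ (v.toList.count 1)) •
        mstE u.toList v.toList) ∘ₗ
    (MonoidAlgebra.coeffLinearEquiv ℚ).toLinearMap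

lemma mstR_apply (f g : H) : mstR f g = mst f g := by
  rw [mstR, LinearMap.finsupp_sum_apply]
  refine Finsupp.sum_congr fun u _ => ?_
  rw [LinearMap.comp_apply, LinearEquiv.coe_coe, MonoidAlgebra.coeffLinearEquiv_apply,
    Finsupp.linearCombination_apply]
  refine Finsupp.sum_congr fun v _ => ?_
  rw [smul_smul]
  ring_nf

lemma mst_add_right (f g₁ g₂ : H) : mst f (g₁ + g₂) = mst f g₁ + mst f g₂ := by
  simp only [← mstR_apply, map_add]

lemma mst_one_right (f : H) : mst f 1 = 0 := by
  simp [mst, MonoidAlgebra.one_def, mstE_nil_right]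

lemma neg_one_pow_mul_self (k : ℕ) : (-1 : ℚ) ^ k * (-1) ^ k = 1 := by
  rw [← mul_pow]; norm_num

lemma mst_wrd_X {l : List Ltr} (hl : l ≠ []) :
    mst (wrd l) Xh = (-1 : ℚ) ^ (l.count 1) • Xh ^ l.length := by
  change mst (wrd l) (wrd [0]) = _
  rw [mst_wrd_wrd, mstE_singleton_right hl]
  simp [List.map_const', ew_replicate_zero]

lemma mst_wrd_Y {l : List Ltr} (hl : l ≠ []) : mst (wrd l) Yh = -wrd l := by
  change mst (wrd l) (wrd [1]) = _
  rw [mst_wrd_wrd, mstE_singleton_right hl]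
  simp [ew, smul_smul, neg_one_pow_mul_self]

lemma mst_X_wrd {l : List Ltr} (hl : l ≠ []) :
    mst Xh (wrd l) = (-1 : ℚ) ^ (l.count 1) • Xh ^ l.length := by
  obtain ⟨b, bs, rfl⟩ := List.exists_cons_of_ne_nil hl
  change mst (wrd [0]) (wrd _) = _
  rw [mst_wrd_wrd, mstE_singleton_left]
  simp [List.map_const', ew_zero_cons, ew_replicate_zero, pow_succ']

lemma mst_Y_wrd {l : List Ltr} (hl : l ≠ []) : mst Yh (wrd l) = -wrd l := by
  obtain ⟨b, bs, rfl⟩ := List.exists_cons_of_ne_nil hl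
  change mst (wrd [1]) (wrd _) = _
  rw [mst_wrd_wrd, mstE_singleton_left]
  simp [ew, smul_smul, neg_one_pow_mul_self]

lemma mst_wrd_X_mul (l : List Ltr) {l' : List Ltr} (hl' : l' ≠ []) :
    mst (wrd l) (Xh * wrd l') = Xh * mst (wrd l) (wrd l') := by
  rw [← wrd_zero_cons, mst_wrd_wrd, mst_wrd_wrd, mstE_zero_cons_right l hl', mul_smul_comm]
  simp

lemma mst_Y_mul_Y_mul {l l' : List Ltr} (hl : l ≠ []) (hl' : l' ≠ []) :
    mst (Yh * wrd l) (Yh * wrd l')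
      = Yh * mst (Yh * wrd l) (wrd l') + Yh * mst (wrd l) ((Xh + Yh) * wrd l') := by
  obtain ⟨a, as, rfl⟩ := List.exists_cons_of_ne_nil hl
  obtain ⟨c, cs, rfl⟩ := List.exists_cons_of_ne_nil hl'
  rw [add_mul, mst_add_right, mst_wrd_X_mul _ hl']
  simp only [← wrd_one_cons, mst_wrd_wrd, mstE_cons_cons, mul_one, eH, if_neg one_ne_zero,
    List.count_cons_self, pow_succ, mul_smul_comm, neg_mul, mul_add, mul_neg, mul_assoc]
  module

lemma mst_Z_Z_mul (l : List Ltr) :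
    mst (Xh + Yh) ((Xh + Yh) * wrd l) = -((Xh + Yh) * wrd l) := by
  have h0 : (0 :: l) ≠ [] := List.cons_ne_nil 0 l
  have h1 : (1 :: l) ≠ [] := List.cons_ne_nil 1 l
  rw [add_mul, ← wrd_zero_cons, ← wrd_one_cons, mst_add_left, mst_add_right, mst_add_right,
    mst_X_wrd h0, mst_X_wrd h1, mst_Y_wrd h0, mst_Y_wrd h1]
  simp only [List.count_cons_self, List.count_cons_of_ne zero_ne_one, List.length_cons, pow_succ]
  module

lemma yPow_mul_Z_eq (m : ℕ) :
    Yh ^ (m + 1) * (Xh + Yh)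
      = wrd (List.replicate (m + 1) 1 ++ [0]) + wrd (List.replicate (m + 2) 1) := by
  rw [mul_add, wrd_append, wrd_replicate_one, wrd_replicate_one, ← pow_succ]
  rfl

lemma mst_yPow_mul_Z_X (m : ℕ) : mst (Yh ^ (m + 1) * (Xh + Yh)) Xh = 0 := by
  rw [yPow_mul_Z_eq, mst_add_left, mst_wrd_X (by simp), mst_wrd_X (by simp)]
  simp [pow_succ]

lemma mst_yPow_mul_Z_Y (m : ℕ) :
    mst (Yh ^ (m + 1) * (Xh + Yh)) Yh = -(Yh ^ (m + 1) * (Xh + Yh)) := by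
  rw [yPow_mul_Z_eq, mst_add_left, mst_wrd_Y (by simp), mst_wrd_Y (by simp), neg_add]

lemma mst_yPow_mul_Z_X_mul (m : ℕ) (l : List Ltr) :
    mst (Yh ^ (m + 1) * (Xh + Yh)) (Xh * wrd l)
      = Xh * mst (Yh ^ (m + 1) * (Xh + Yh)) (wrd l) := by
  rcases eq_or_ne l [] with rfl | hl
  · rw [wrd_nil, mul_one, mst_yPow_mul_Z_X, mst_one_right, mul_zero]
  · rw [yPow_mul_Z_eq, mst_add_left, mst_add_left, mst_wrd_X_mul _ hl, mst_wrd_X_mul _ hl, mul_add]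

lemma mst_yPow_mul_Z_Y_mul_succ (m : ℕ) (l : List Ltr) :
    mst (Yh ^ (m + 1 + 1) * (Xh + Yh)) (Yh * wrd l)
      = Yh * mst (Yh ^ (m + 1 + 1) * (Xh + Yh)) (wrd l)
        + Yh * mst (Yh ^ (m + 1) * (Xh + Yh)) ((Xh + Yh) * wrd l) := by
  rcases eq_or_ne l [] with rfl | hl
  · rw [wrd_nil, mul_one, mul_one, mst_one_right, mst_add_right, mst_yPow_mul_Z_X,
      mst_yPow_mul_Z_Y, mst_yPow_mul_Z_Y, pow_succ' Yh (m + 1)]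
    noncomm_ring
  · rw [pow_succ' Yh (m + 1), mul_assoc, yPow_mul_Z_eq, mul_add, mst_add_left, mst_add_left,
      mst_add_left, mst_Y_mul_Y_mul (by simp) hl, mst_Y_mul_Y_mul (by simp) hl]
    noncomm_ring

lemma mst_Y_mul_Z_Y_mul (l : List Ltr) :
    mst (Yh * (Xh + Yh)) (Yh * wrd l)
      = Yh * mst (Yh * (Xh + Yh)) (wrd l) - Yh * ((Xh + Yh) * wrd l) := by
  rcases eq_or_ne l [] with rfl | hl
  · have hY : mst (Yh * (Xh + Yh)) Yh = -(Yh * (Xh + Yh)) := by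
      simpa using mst_yPow_mul_Z_Y 0
    rw [wrd_nil, mul_one, mul_one, mst_one_right, hY]
    noncomm_ring
  · have hZ : mst (wrd [0]) ((Xh + Yh) * wrd l) + mst (wrd [1]) ((Xh + Yh) * wrd l)
        = -((Xh + Yh) * wrd l) := by
      rw [← mst_add_left]
      exact mst_Z_Z_mul l
    have hF : Yh * (Xh + Yh) = Yh * wrd [0] + Yh * wrd [1] := mul_add _ _ _
    rw [hF, mst_add_left, mst_add_left, mst_Y_mul_Y_mul (by simp) hl,
      mst_Y_mul_Y_mul (by simp) hl, add_add_add_comm, ← mul_add Yh (mst (wrd [0]) _), hZ]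
    noncomm_ring

noncomputable def signedMst (m : ℕ) : H →ₗ[ℚ] H :=
  (-1 : ℚ) ^ m • mstR (Yh ^ (m + 1) * (Xh + Yh))

lemma signedMst_apply (m : ℕ) (g : H) :
    signedMst m g = (-1 : ℚ) ^ m • mst (Yh ^ (m + 1) * (Xh + Yh)) g := by
  rw [signedMst, LinearMap.smul_apply, mstR_apply]

theorem signedMst_isFRecursive : IsFRecursive signedMst where
  map_one m := by rw [signedMst_apply, mst_one_right, smul_zero]
  map_X_mul m l := by rw [signedMst_apply, signedMst_apply, mst_yPow_mul_Z_X_mul, mul_smul_comm]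
  map_Y_mul_succ m l := by
    rw [signedMst_apply, signedMst_apply, signedMst_apply, mst_yPow_mul_Z_Y_mul_succ,
      pow_succ (-1 : ℚ) m]
    simp only [mul_smul_comm]
    module
  map_Y_mul_zero l := by
    simp only [signedMst_apply, pow_zero, one_smul, zero_add, pow_one, mst_Y_mul_Z_Y_mul]

/-- For `n ≥ 1` and `w ∈ 𝔥`:
`f_n(w) = (-1)^{n+1} φ(yⁿz ⊛̃ φ(w))` with `z = x+y`. -/
theorem stmt12 (n : ℕ) (hn : 1 ≤ n) (w : H) :
    fZ (n : ℤ) w = ((-1 : ℚ) ^ (n + 1)) • phiH (mst (Yh ^ n * (Xh + Yh)) (phiH w)) := by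
  obtain ⟨m, rfl⟩ : ∃ m, n = m + 1 := ⟨n - 1, by omega⟩
  have h : conjF m (phiH w) = signedMst m (phiH w) := by
    rw [conjF_isFRecursive.unique signedMst_isFRecursive]
  rw [fZ_succ_eq, h, signedMst_apply, map_smul]
  congr 1
  ring
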